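/- arXiv:1912.10731 — 3 statements merged into one kernel-verified Lean document; each statement's English description precedes it below -/
import Mathlib

section
/- Let a be a C² vector field on U, let the Γ^k_{ij} be of class C¹, and let ψ ∈ C²(U). Then Λ(ψ) = Div²(ψ â) − Div(ψ ∇_a a) on U. -/
/-
By the product rule, `Div(ψ a) a^i` and `Div(ψ â)^i` differ by exactly
`ψ (∇_a a)^i`: the derivative falling on the second factor `a^i` of `â` produces
`ψ a^m ∂_m a^i`, and the connection term `Γ^i_{lj} ψ a^l a^j` is the rest of `ψ ∇_a a`.
Hence `Div(ψ a) a = Div(ψ â) − ψ ∇_a a` as vector fields on `U`, and applying the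
(additive, local) divergence gives the claim; the regularity assumptions make both
fields on the right differentiable, which is what additivity of `Div` requires.
-/

open scoped BigOperators

/-- Partial derivative in the `j`-th coordinate direction. -/
noncomputable def pd {d : ℕ} (j : Fin d) (f : (Fin d → ℝ) → ℝ) (x : Fin d → ℝ) : ℝ :=
  fderiv ℝ f x (Pi.single j 1)

/-- Divergence of a vector field relative to the Christoffel symbols `Γ`:
`DivVF X := ∂_j X^j + Γ^j_{kj} X^k`. -/
noncomputable def DivVF {d : ℕ} (Γ : Fin d → Fin d → Fin d → (Fin d → ℝ) → ℝ)
    (X : Fin d → (Fin d → ℝ) → ℝ) (x : Fin d → ℝ) : ℝ :=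
  (∑ j, pd j (X j) x) + ∑ k, ∑ j, Γ j k j x * X k x

/-- Divergence of a matrix field: `(DivMat S)^i := ∂_j S^{ij} + Γ^i_{lj} S^{lj} + Γ^j_{lj} S^{il}`. -/
noncomputable def DivMat {d : ℕ} (Γ : Fin d → Fin d → Fin d → (Fin d → ℝ) → ℝ)
    (S : Fin d → Fin d → (Fin d → ℝ) → ℝ) (i : Fin d) (x : Fin d → ℝ) : ℝ :=
  (∑ j, pd j (S i j) x) + (∑ l, ∑ j, Γ i l j x * S l j x) + ∑ l, ∑ j, Γ j l j x * S i l x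

/-- `(∇_a a)^l := a^m ∂_m a^l + Γ^l_{mk} a^m a^k`. -/
noncomputable def nablaSelf {d : ℕ} (Γ : Fin d → Fin d → Fin d → (Fin d → ℝ) → ℝ)
    (a : Fin d → (Fin d → ℝ) → ℝ) (l : Fin d) (x : Fin d → ℝ) : ℝ :=
  (∑ m, a m x * pd m (a l) x) + ∑ m, ∑ k, Γ l m k x * (a m x * a k x)

/-- The second order operator `Λ(ψ) := Div(Div(ψ a) a)`. -/
noncomputable def Lam {d : ℕ} (Γ : Fin d → Fin d → Fin d → (Fin d → ℝ) → ℝ)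
    (a : Fin d → (Fin d → ℝ) → ℝ) (ψ : (Fin d → ℝ) → ℝ) (x : Fin d → ℝ) : ℝ :=
  DivVF Γ (fun l y => DivVF Γ (fun j z => ψ z * a j z) y * a l y) x

open Finset

section Divergence

variable {d : ℕ}

theorem pd_mul {f g : (Fin d → ℝ) → ℝ} {x : Fin d → ℝ}
    (hf : DifferentiableAt ℝ f x) (hg : DifferentiableAt ℝ g x) (j : Fin d) :
    pd j (fun y => f y * g y) x = pd j f x * g x + f x * pd j g x := by
  unfold pd
  rw [fderiv_fun_mul hf hg]
  simp only [add_apply, smul_apply, smul_eq_mul]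
  ring

theorem pd_congr_of_eventuallyEq {f g : (Fin d → ℝ) → ℝ} {x : Fin d → ℝ}
    (h : f =ᶠ[nhds x] g) (j : Fin d) : pd j f x = pd j g x := by
  unfold pd
  rw [h.fderiv_eq]

theorem pd_sub {f g : (Fin d → ℝ) → ℝ} {x : Fin d → ℝ}
    (hf : DifferentiableAt ℝ f x) (hg : DifferentiableAt ℝ g x) (j : Fin d) :
    pd j (fun y => f y - g y) x = pd j f x - pd j g x := by
  unfold pd
  rw [fderiv_fun_sub hf hg]
  rfl

theorem ContDiffOn.pd {U : Set (Fin d → ℝ)} (hU : IsOpen U) {f : (Fin d → ℝ) → ℝ}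
    {n : WithTop ℕ∞} (hf : ContDiffOn ℝ (n + 1) f U) (j : Fin d) :
    ContDiffOn ℝ n (pd j f) U :=
  (hf.fderiv_of_isOpen hU le_rfl).clm_apply contDiffOn_const

variable (Γ : Fin d → Fin d → Fin d → (Fin d → ℝ) → ℝ)

theorem DivVF_congr_of_eventuallyEq {X Y : Fin d → (Fin d → ℝ) → ℝ} {x : Fin d → ℝ}
    (h : ∀ j, X j =ᶠ[nhds x] Y j) : DivVF Γ X x = DivVF Γ Y x := by
  simp only [DivVF, pd_congr_of_eventuallyEq (h _), (h _).self_of_nhds]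

theorem DivVF_sub {X Y : Fin d → (Fin d → ℝ) → ℝ} {x : Fin d → ℝ}
    (hX : ∀ j, DifferentiableAt ℝ (X j) x) (hY : ∀ j, DifferentiableAt ℝ (Y j) x) :
    DivVF Γ (fun j y => X j y - Y j y) x = DivVF Γ X x - DivVF Γ Y x := by
  simp only [DivVF, pd_sub (hX _) (hY _), mul_sub, sum_sub_distrib]
  ring

theorem contDiffOn_DivMat {U : Set (Fin d → ℝ)} (hU : IsOpen U) {n : WithTop ℕ∞}
    (hΓ : ∀ k i j, ContDiffOn ℝ n (Γ k i j) U)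
    {S : Fin d → Fin d → (Fin d → ℝ) → ℝ} (hS : ∀ i j, ContDiffOn ℝ (n + 1) (S i j) U)
    (i : Fin d) : ContDiffOn ℝ n (DivMat Γ S i) U := by
  have hS' : ∀ i j, ContDiffOn ℝ n (S i j) U := fun i j => (hS i j).of_le le_self_add
  unfold DivMat
  refine ((ContDiffOn.sum fun j _ => (hS i j).pd hU j).add ?_).add ?_ <;>
    exact ContDiffOn.sum fun l _ => ContDiffOn.sum fun j _ => (hΓ _ _ _).mul (hS' _ _)

theorem contDiffOn_nablaSelf {U : Set (Fin d → ℝ)} (hU : IsOpen U) {n : WithTop ℕ∞}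
    (hΓ : ∀ k i j, ContDiffOn ℝ n (Γ k i j) U)
    {a : Fin d → (Fin d → ℝ) → ℝ} (ha : ∀ l, ContDiffOn ℝ (n + 1) (a l) U)
    (l : Fin d) : ContDiffOn ℝ n (nablaSelf Γ a l) U := by
  have ha' : ∀ l, ContDiffOn ℝ n (a l) U := fun l => (ha l).of_le le_self_add
  unfold nablaSelf
  exact (ContDiffOn.sum fun m _ => (ha' m).mul ((ha l).pd hU m)).add
    (ContDiffOn.sum fun m _ => ContDiffOn.sum fun k _ => (hΓ l m k).mul ((ha' m).mul (ha' k)))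

theorem DivVF_mul_mul_eq_DivMat_sub {ψ : (Fin d → ℝ) → ℝ} {a : Fin d → (Fin d → ℝ) → ℝ}
    {y : Fin d → ℝ} (hψ : DifferentiableAt ℝ ψ y) (ha : ∀ j, DifferentiableAt ℝ (a j) y)
    (i : Fin d) :
    DivVF Γ (fun j z => ψ z * a j z) y * a i y
      = DivMat Γ (fun k l z => ψ z * (a k z * a l z)) i y - ψ y * nablaSelf Γ a i y := by
  have hpd : ∀ j, pd j (fun z => ψ z * (a i z * a j z)) y
      = pd j (fun z => ψ z * a j z) y * a i y + ψ y * (a j y * pd j (a i) y) := by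
    intro j
    have hfe : (fun z => ψ z * (a i z * a j z)) = fun z => (ψ z * a j z) * a i z := by
      funext z; ring
    rw [hfe, pd_mul (hψ.fun_mul (ha j)) (ha i)]
    ring
  simp only [DivVF, DivMat, nablaSelf, hpd, sum_add_distrib, add_mul, mul_add, sum_mul, mul_sum]
  ring_nf
  ac_rfl

end Divergence

/-- For a `C²` vector field `a`, `C¹` Christoffel symbols and `ψ ∈ C²(U)`:
`Λ(ψ) = Div²(ψ â) − Div(ψ ∇_a a)` on `U`, where `Div² S := Div(Div S)` and `â^{kl} = a^k a^l`. -/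
theorem statement2 {d : ℕ} (U : Set (Fin d → ℝ)) (hU : IsOpen U)
    (Γ : Fin d → Fin d → Fin d → (Fin d → ℝ) → ℝ)
    (hΓ : ∀ k i j, ContDiffOn ℝ 1 (Γ k i j) U)
    (a : Fin d → (Fin d → ℝ) → ℝ) (ha : ∀ l, ContDiffOn ℝ 2 (a l) U)
    (ψ : (Fin d → ℝ) → ℝ) (hψ : ContDiffOn ℝ 2 ψ U) :
    ∀ x ∈ U,
      Lam Γ a ψ x
        = DivVF Γ (fun i y => DivMat Γ (fun k l z => ψ z * (a k z * a l z)) i y) x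
          - DivVF Γ (fun l y => ψ y * nablaSelf Γ a l y) x := by
  intro x hx
  have hdiff : ∀ {f : (Fin d → ℝ) → ℝ} {n : WithTop ℕ∞}, ContDiffOn ℝ n f U → n ≠ 0 →
      ∀ y ∈ U, DifferentiableAt ℝ f y := fun hf hn y hy =>
    (hf.differentiableOn hn y hy).differentiableAt (hU.mem_nhds hy)
  have hψa : ∀ k l, ContDiffOn ℝ (1 + 1) (fun z => ψ z * (a k z * a l z)) U :=
    fun k l => hψ.mul ((ha k).mul (ha l))
  have hψnabla : ∀ l, ContDiffOn ℝ 1 (fun y => ψ y * nablaSelf Γ a l y) U :=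
    fun l => (hψ.of_le one_le_two).mul (contDiffOn_nablaSelf Γ hU hΓ ha l)
  have hlocal : ∀ i, (fun y => DivVF Γ (fun j z => ψ z * a j z) y * a i y) =ᶠ[nhds x]
      fun y => DivMat Γ (fun k l z => ψ z * (a k z * a l z)) i y - ψ y * nablaSelf Γ a i y :=
    fun i => Filter.eventually_of_mem (hU.mem_nhds hx) fun y hy =>
      DivVF_mul_mul_eq_DivMat_sub Γ (hdiff hψ two_ne_zero y hy)
        (fun j => hdiff (ha j) two_ne_zero y hy) i
  rw [Lam, DivVF_congr_of_eventuallyEq Γ hlocal]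
  exact DivVF_sub Γ (fun i => hdiff (contDiffOn_DivMat Γ hU hΓ hψa i) one_ne_zero x hx)
    (fun l => hdiff (hψnabla l) one_ne_zero x hx)
end

section
/- Fix q ∈ [1,∞) and T > 0, let (Y,ν) be a finite measure space, and let H : ℝ → ℝ be continuous and bounded. Let f_j, f : [0,T] × Y → ℝ be jointly measurable with f_j(t,·), f(t,·) ∈ L²(ν) for a.e. t ∈ [0,T], t ↦ ‖f_j(t,·)‖_{L²(ν)} and t ↦ ‖f(t,·)‖_{L²(ν)} in L^q([0,T]), and suppose ∫₀^T ‖f_j(t,·) − f(t,·)‖_{L²(ν)}^q dt → 0 as j → ∞. Then ∫₀^T ‖H(f_j(t,·)) f_j(t,·) − H(f(t,·)) f(t,·)‖_{L²(ν)}^q dt → 0 as j → ∞. -/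
/-!
The map `x ↦ H(x) x` is continuous and satisfies `|H(a) a - H(b) b| ≤ 2C (|a - b| + |b|)`.
Both the inner `L²(ν)` level and the outer `L^q` level in time then follow from a single
dominated convergence argument for sequences that only converge in mean: from any subsequence
extract a further one with `∑ₖ ∫ wₖ < ∞`, so that `wₖ → 0` a.e. and `∑ₖ wₖ` is an integrable
majorant. At the inner level pointwise convergence comes from continuity of `H`; at the outer
level it is the inner statement, applied for a.e. fixed `t`.
-/

open MeasureTheory Filter
open scoped ENNReal NNReal Topology

theorem ENNReal.tendsto_rpow_nhds_zero_iff {ι : Type*} {l : Filter ι} {u : ι → ℝ≥0∞} {r : ℝ}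
    (hr : 0 < r) : Tendsto (fun i => u i ^ r) l (𝓝 0) ↔ Tendsto u l (𝓝 0) := by
  have hcont : ∀ s : ℝ, 0 < s → ∀ {v : ι → ℝ≥0∞}, Tendsto v l (𝓝 0) →
      Tendsto (fun i => v i ^ s) l (𝓝 0) := fun s hs v hv => by
    simpa [Function.comp_def, ENNReal.zero_rpow_of_pos hs] using
      ((ENNReal.continuous_rpow_const (y := s)).tendsto 0).comp hv
  refine ⟨fun h => ?_, hcont r hr⟩
  simpa [← ENNReal.rpow_mul, mul_inv_cancel₀ hr.ne'] using hcont r⁻¹ (inv_pos.2 hr) h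

namespace MeasureTheory

variable {α : Type*} [MeasurableSpace α] {μ : Measure α}

theorem exists_strictMono_lintegral_tsum_lt_top {w : ℕ → α → ℝ≥0∞}
    (hw : ∀ j, AEMeasurable (w j) μ) (h : Tendsto (fun j => ∫⁻ x, w j x ∂μ) atTop (𝓝 0)) :
    ∃ φ : ℕ → ℕ, StrictMono φ ∧ ∫⁻ x, ∑' k, w (φ k) x ∂μ < ∞ := by
  have hev : ∀ n : ℕ, ∀ᶠ j in atTop, ∫⁻ x, w j x ∂μ < 2⁻¹ ^ n := fun n =>
    h (Iio_mem_nhds (ENNReal.pow_pos (ENNReal.inv_pos.2 ENNReal.ofNat_ne_top) n))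
  obtain ⟨φ, hφ, hφ_lt⟩ := extraction_forall_of_eventually hev
  refine ⟨φ, hφ, ?_⟩
  calc ∫⁻ x, ∑' k, w (φ k) x ∂μ = ∑' k, ∫⁻ x, w (φ k) x ∂μ := lintegral_tsum fun k => hw (φ k)
    _ ≤ ∑' k : ℕ, (2⁻¹ : ℝ≥0∞) ^ k := ENNReal.tsum_le_tsum fun k => (hφ_lt k).le
    _ = 2 := by rw [ENNReal.tsum_geometric, ENNReal.one_sub_inv_two, inv_inv]
    _ < ∞ := ENNReal.ofNat_lt_top

theorem tendsto_lintegral_zero_of_subseq_dominated {w v : ℕ → α → ℝ≥0∞} {g : α → ℝ≥0∞}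
    {c : ℝ≥0∞} (hc : c ≠ ∞) (hw : ∀ j, AEMeasurable (w j) μ) (hv : ∀ j, AEMeasurable (v j) μ)
    (hg : AEMeasurable g μ) (hg_int : ∫⁻ x, g x ∂μ < ∞)
    (hdom : ∀ j, ∀ᵐ x ∂μ, v j x ≤ c * (w j x + g x))
    (hpt : ∀ᵐ x ∂μ, ∀ φ : ℕ → ℕ, Tendsto (fun k => w (φ k) x) atTop (𝓝 0) →
      Tendsto (fun k => v (φ k) x) atTop (𝓝 0))
    (h : Tendsto (fun j => ∫⁻ x, w j x ∂μ) atTop (𝓝 0)) :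
    Tendsto (fun j => ∫⁻ x, v j x ∂μ) atTop (𝓝 0) := by
  refine tendsto_of_subseq_tendsto fun ns hns => ?_
  obtain ⟨φ, -, hS⟩ := exists_strictMono_lintegral_tsum_lt_top (fun k => hw (ns k)) (h.comp hns)
  set S : α → ℝ≥0∞ := fun x => ∑' k, w (ns (φ k)) x
  have hSm : AEMeasurable S μ := AEMeasurable.tsum fun k => hw (ns (φ k))
  have hw0 : ∀ᵐ x ∂μ, Tendsto (fun k => w (ns (φ k)) x) atTop (𝓝 0) := by
    filter_upwards [ae_lt_top' hSm hS.ne] with x hx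
    exact ENNReal.tendsto_atTop_zero_of_tsum_ne_top hx.ne
  refine ⟨φ, ?_⟩
  simpa only [lintegral_zero] using tendsto_lintegral_of_dominated_convergence' (f := fun _ => 0)
    (fun x => c * (S x + g x))
    (fun k => hv (ns (φ k)))
    (fun k => (hdom (ns (φ k))).mono fun x hx =>
      hx.trans (mul_le_mul_right (add_le_add (ENNReal.le_tsum k) le_rfl) c))
    (by
      rw [lintegral_const_mul'' (f := fun x => S x + g x) _ (hSm.add hg), lintegral_add_left' hSm]
      exact ENNReal.mul_ne_top hc (ENNReal.add_ne_top.2 ⟨hS.ne, hg_int.ne⟩))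
    (by filter_upwards [hw0, hpt] with x hx hx' using hx' _ hx)

theorem tendsto_lintegral_rpow_zero_of_subseq_dominated {p : ℝ} (hp : 0 < p)
    {d e : ℕ → α → ℝ≥0∞} {g : α → ℝ≥0∞} {C : ℝ≥0∞} (hC : C ≠ ∞)
    (hd : ∀ j, AEMeasurable (d j) μ) (he : ∀ j, AEMeasurable (e j) μ)
    (hg : AEMeasurable g μ) (hg_int : ∫⁻ x, g x ^ p ∂μ < ∞)
    (hdom : ∀ j, ∀ᵐ x ∂μ, e j x ≤ C * (d j x + g x))
    (hpt : ∀ᵐ x ∂μ, ∀ φ : ℕ → ℕ, Tendsto (fun k => d (φ k) x) atTop (𝓝 0) →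
      Tendsto (fun k => e (φ k) x) atTop (𝓝 0))
    (h : Tendsto (fun j => ∫⁻ x, d j x ^ p ∂μ) atTop (𝓝 0)) :
    Tendsto (fun j => ∫⁻ x, e j x ^ p ∂μ) atTop (𝓝 0) := by
  refine tendsto_lintegral_zero_of_subseq_dominated
    (c := C ^ p * ENNReal.LpAddConst (ENNReal.ofReal p)⁻¹)
    (ENNReal.mul_ne_top (ENNReal.rpow_ne_top_of_nonneg hp.le hC) (ENNReal.LpAddConst_lt_top _).ne)
    (fun j => (hd j).pow_const p) (fun j => (he j).pow_const p) (hg.pow_const p) hg_int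
    (fun j => (hdom j).mono fun x hx => ?_) ?_ h
  · calc e j x ^ p ≤ (C * (d j x + g x)) ^ p := ENNReal.rpow_le_rpow hx hp.le
      _ = C ^ p * (d j x + g x) ^ p := ENNReal.mul_rpow_of_nonneg _ _ hp.le
      _ ≤ C ^ p * (ENNReal.LpAddConst (ENNReal.ofReal p)⁻¹ * (d j x ^ p + g x ^ p)) :=
        mul_le_mul_right (ENNReal.rpow_add_le_mul_rpow_add_rpow' _ _ hp.le) _
      _ = _ := (mul_assoc _ _ _).symm
  · filter_upwards [hpt] with x hx φ hφ
    simp only [ENNReal.tendsto_rpow_nhds_zero_iff hp] at hφ ⊢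
    exact hx φ hφ

theorem tendsto_eLpNorm_nhds_zero_iff_lintegral {E : Type*} [NormedAddCommGroup E]
    {p : ℝ≥0∞} (hp0 : p ≠ 0) (hp : p ≠ ∞) {F : ℕ → α → E} :
    Tendsto (fun k => eLpNorm (F k) p μ) atTop (𝓝 0) ↔
      Tendsto (fun k => ∫⁻ x, ‖F k x‖ₑ ^ p.toReal ∂μ) atTop (𝓝 0) := by
  simp_rw [eLpNorm_eq_lintegral_rpow_enorm_toReal hp0 hp]
  exact ENNReal.tendsto_rpow_nhds_zero_iff (one_div_pos.2 (ENNReal.toReal_pos hp0 hp))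

theorem eLpNorm_le_mul_add_of_enorm_le {E F G : Type*} [NormedAddCommGroup E]
    [NormedAddCommGroup F] [NormedAddCommGroup G] {f : α → E} {g : α → F} {h : α → G}
    (hg : AEStronglyMeasurable g μ) (hh : AEStronglyMeasurable h μ) {C : ℝ≥0}
    (hfgh : ∀ᵐ x ∂μ, ‖f x‖ₑ ≤ C * (‖g x‖ₑ + ‖h x‖ₑ)) (p : ℝ≥0∞) :
    eLpNorm f p μ ≤ C * ENNReal.LpAddConst p * (eLpNorm g p μ + eLpNorm h p μ) := by
  calc eLpNorm f p μ ≤ C * eLpNorm (fun x => ‖g x‖ₑ + ‖h x‖ₑ) p μ :=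
        eLpNorm_le_mul_eLpNorm_of_ae_le_mul' hfgh p
    _ ≤ C * (ENNReal.LpAddConst p * (eLpNorm g p μ + eLpNorm h p μ)) := by
        grw [← eLpNorm_enorm g, ← eLpNorm_enorm h]
        exact mul_le_mul_right (eLpNorm_add_le' hg.enorm.aestronglyMeasurable
          hh.enorm.aestronglyMeasurable p) _
    _ = _ := (mul_assoc _ _ _).symm

theorem Measurable.eLpNorm_prod_right {β E : Type*} [MeasurableSpace β] [NormedAddCommGroup E]
    [MeasurableSpace E] [OpensMeasurableSpace E] {ν : Measure β} [SFinite ν]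
    {f : α × β → E} (hf : Measurable f) {p : ℝ≥0∞} (hp0 : p ≠ 0) (hp : p ≠ ∞) :
    Measurable fun x => eLpNorm (fun y => f (x, y)) p ν := by
  simp_rw [eLpNorm_eq_lintegral_rpow_enorm_toReal hp0 hp]
  exact ((hf.enorm.pow_const _).lintegral_prod_right').pow_const _

theorem tendsto_eLpNorm_comp_sub_comp {E F : Type*} [NormedAddCommGroup E]
    [NormedAddCommGroup F] {Φ : E → F} (hΦ : Continuous Φ) {C : ℝ≥0}
    (hΦC : ∀ a b, ‖Φ a - Φ b‖ₑ ≤ C * (‖a - b‖ₑ + ‖b‖ₑ)) {p : ℝ≥0∞} (hp0 : p ≠ 0) (hp : p ≠ ∞)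
    {u : ℕ → α → E} {l : α → E} (hu : ∀ k, AEStronglyMeasurable (u k) μ) (hl : MemLp l p μ)
    (h : Tendsto (fun k => eLpNorm (fun x => u k x - l x) p μ) atTop (𝓝 0)) :
    Tendsto (fun k => eLpNorm (fun x => Φ (u k x) - Φ (l x)) p μ) atTop (𝓝 0) := by
  rw [tendsto_eLpNorm_nhds_zero_iff_lintegral hp0 hp] at h ⊢
  refine tendsto_lintegral_rpow_zero_of_subseq_dominated (ENNReal.toReal_pos hp0 hp)
    ENNReal.coe_ne_top (fun k => ((hu k).sub hl.1).enorm)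
    (fun k => ((hΦ.comp_aestronglyMeasurable (hu k)).sub
      (hΦ.comp_aestronglyMeasurable hl.1)).enorm) hl.1.enorm
    (lintegral_rpow_enorm_lt_top_of_eLpNorm_lt_top hp0 hp hl.2)
    (fun k => ae_of_all _ fun x => hΦC _ _) (ae_of_all _ fun x φ hφ => ?_) h
  have hlim : Tendsto (fun k => u (φ k) x) atTop (𝓝 (l x)) := by
    simpa only [tendsto_iff_edist_tendsto_0, edist_eq_enorm_sub, Pi.sub_apply] using hφ
  simpa only [tendsto_iff_edist_tendsto_0, edist_eq_enorm_sub, Function.comp_apply] using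
    (hΦ.tendsto (l x)).comp hlim

end MeasureTheory

theorem enorm_apply_mul_sub_apply_mul_le {H : ℝ → ℝ} {C : ℝ} (hH : ∀ t, |H t| ≤ C) (a b : ℝ) :
    ‖H a * a - H b * b‖ₑ ≤ (2 * C).toNNReal * (‖a - b‖ₑ + ‖b‖ₑ) := by
  have hC : 0 ≤ C := (abs_nonneg _).trans (hH 0)
  have key : |H a * a - H b * b| ≤ 2 * C * (|a - b| + |b|) :=
    calc |H a * a - H b * b| = |H a * (a - b) + (H a - H b) * b| := by ring_nf
      _ ≤ |H a| * |a - b| + |H a - H b| * |b| := by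
        rw [← abs_mul, ← abs_mul]; exact abs_add_le _ _
      _ ≤ C * |a - b| + (C + C) * |b| := by
        gcongr
        exacts [hH a, (abs_sub _ _).trans (add_le_add (hH a) (hH b))]
      _ ≤ 2 * C * (|a - b| + |b|) := by nlinarith [abs_nonneg (a - b)]
  rw [show (((2 * C).toNNReal : ℝ≥0∞)) = ENNReal.ofReal (2 * C) from rfl]
  simp only [Real.enorm_eq_ofReal_abs]
  rw [← ENNReal.ofReal_add (abs_nonneg _) (abs_nonneg _), ← ENNReal.ofReal_mul (by positivity)]
  exact ENNReal.ofReal_le_ofReal key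

theorem statement14_general {Y : Type*} [MeasurableSpace Y] (ν : Measure Y) [IsFiniteMeasure ν]
    (q : ℝ) (hq : 1 ≤ q) (T : ℝ)
    (H : ℝ → ℝ) (hH : Continuous H) (Cb : ℝ) (hHb : ∀ t : ℝ, |H t| ≤ Cb)
    (f : ℕ → ℝ → Y → ℝ) (flim : ℝ → Y → ℝ)
    (hmeas : ∀ j, Measurable fun p : ℝ × Y => f j p.1 p.2)
    (hmeaslim : Measurable fun p : ℝ × Y => flim p.1 p.2)
    (hflim2 : ∀ᵐ t ∂(volume.restrict (Set.Icc (0 : ℝ) T)), MemLp (flim t) 2 ν)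
    (hflimq : (∫⁻ t in Set.Icc (0 : ℝ) T, eLpNorm (flim t) 2 ν ^ q) < ⊤)
    (hconv : Tendsto
      (fun j => ∫⁻ t in Set.Icc (0 : ℝ) T,
        eLpNorm (fun y => f j t y - flim t y) 2 ν ^ q) atTop (𝓝 0)) :
    Tendsto
      (fun j => ∫⁻ t in Set.Icc (0 : ℝ) T,
        eLpNorm (fun y => H (f j t y) * f j t y - H (flim t y) * flim t y) 2 ν ^ q)
      atTop (𝓝 0) := by
  have hgrowth := enorm_apply_mul_sub_apply_mul_le hHb
  have hsection {g : ℝ × Y → ℝ} (hg : Measurable g) (t : ℝ) :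
      AEStronglyMeasurable (fun y => g (t, y)) ν :=
    (hg.comp measurable_prodMk_left).aestronglyMeasurable
  have hmeasN {g : ℝ × Y → ℝ} (hg : Measurable g) : Measurable fun p => H (g p) * g p :=
    (hH.measurable.comp hg).mul hg
  refine tendsto_lintegral_rpow_zero_of_subseq_dominated (zero_lt_one.trans_le hq)
    (d := fun j t => eLpNorm (fun y => f j t y - flim t y) 2 ν)
    (e := fun j t => eLpNorm (fun y => H (f j t y) * f j t y - H (flim t y) * flim t y) 2 ν)
    (g := fun t => eLpNorm (flim t) 2 ν) (C := (2 * Cb).toNNReal * ENNReal.LpAddConst 2)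
    (ENNReal.mul_ne_top ENNReal.coe_ne_top (ENNReal.LpAddConst_lt_top 2).ne)
    (fun j => (((hmeas j).sub hmeaslim).eLpNorm_prod_right two_ne_zero
      ENNReal.ofNat_ne_top).aemeasurable)
    (fun j => (((hmeasN (hmeas j)).sub (hmeasN hmeaslim)).eLpNorm_prod_right two_ne_zero
      ENNReal.ofNat_ne_top).aemeasurable)
    (hmeaslim.eLpNorm_prod_right two_ne_zero ENNReal.ofNat_ne_top).aemeasurable hflimq ?_ ?_ hconv
  · exact fun j => ae_of_all _ fun t => eLpNorm_le_mul_add_of_enorm_le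
      (hsection ((hmeas j).sub hmeaslim) t) (hsection hmeaslim t)
      (ae_of_all _ fun _ => hgrowth _ _) 2
  · filter_upwards [hflim2] with t ht φ hφ
    exact tendsto_eLpNorm_comp_sub_comp (hH.mul continuous_id) hgrowth two_ne_zero
      ENNReal.ofNat_ne_top (fun k => hsection (hmeas (φ k)) t) ht hφ

/-- Fix `q ∈ [1,∞)`, `T > 0`, a finite measure space `(Y,ν)` and a
continuous bounded `H : ℝ → ℝ`. If `f_j, f : [0,T] × Y → ℝ` are jointly measurable,
with `f_j(t,·), f(t,·) ∈ L²(ν)` for a.e. `t`, `t ↦ ‖f_j(t,·)‖_{L²}` and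
`t ↦ ‖f(t,·)‖_{L²}` in `L^q([0,T])`, and `∫₀^T ‖f_j(t,·) − f(t,·)‖_{L²}^q dt → 0`,
then `∫₀^T ‖H(f_j(t,·)) f_j(t,·) − H(f(t,·)) f(t,·)‖_{L²}^q dt → 0`. -/
theorem statement14 {Y : Type*} [MeasurableSpace Y] (ν : Measure Y) [IsFiniteMeasure ν]
    (q : ℝ) (hq : 1 ≤ q) (T : ℝ) (hT : 0 < T)
    (H : ℝ → ℝ) (hH : Continuous H) (Cb : ℝ) (hHb : ∀ t : ℝ, |H t| ≤ Cb)
    (f : ℕ → ℝ → Y → ℝ) (flim : ℝ → Y → ℝ)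
    (hmeas : ∀ j, Measurable fun p : ℝ × Y => f j p.1 p.2)
    (hmeaslim : Measurable fun p : ℝ × Y => flim p.1 p.2)
    (hf2 : ∀ j, ∀ᵐ t ∂(volume.restrict (Set.Icc (0 : ℝ) T)), MemLp (f j t) 2 ν)
    (hflim2 : ∀ᵐ t ∂(volume.restrict (Set.Icc (0 : ℝ) T)), MemLp (flim t) 2 ν)
    (hfq : ∀ j, (∫⁻ t in Set.Icc (0 : ℝ) T, eLpNorm (f j t) 2 ν ^ q) < ⊤)
    (hflimq : (∫⁻ t in Set.Icc (0 : ℝ) T, eLpNorm (flim t) 2 ν ^ q) < ⊤)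
    (hconv : Tendsto
      (fun j => ∫⁻ t in Set.Icc (0 : ℝ) T,
        eLpNorm (fun y => f j t y - flim t y) 2 ν ^ q) atTop (𝓝 0)) :
    Tendsto
      (fun j => ∫⁻ t in Set.Icc (0 : ℝ) T,
        eLpNorm (fun y => H (f j t y) * f j t y - H (flim t y) * flim t y) 2 ν ^ q)
      atTop (𝓝 0) :=
  statement14_general ν q hq T H hH Cb hHb f flim hmeas hmeaslim hflim2 hflimq hconv
end

section
/- There exists a constant C_χ, depending only on χ and not on μ, such that for all μ > 0 and all ξ ∈ ℝ: |G_{F_μ}(ξ)| ≤ C_χ F_μ(ξ); |ξ² F_μ''(ξ)| ≤ C_χ F_μ(ξ) whenever |ξ| ≤ √μ; |ξ² F_μ''(ξ)| ≤ C_χ ξ² whenever √μ ≤ |ξ| ≤ √(2μ); and ξ² F_μ''(ξ) = 0 whenever |ξ| > √(2μ). -/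
/-!
Write `u = ξ² / μ`. Then `F_μ(ξ) = μ χ(u)`, `ξ F_μ'(ξ) − F_μ(ξ) = μ (2u χ'(u) − χ(u))` and
`ξ² F_μ''(ξ) = ξ² (2χ'(u) + 4u χ''(u))`, so every estimate is a statement about `χ` on
`u ≥ 0` in which `μ` no longer appears. On `[0, 1]`, `χ` is the identity, which makes `G` and
`ξ² F_μ''` exact multiples of `F_μ`; on `[1, 2]`, `χ'` and `χ''` are bounded by compactness and in
`G` they are absorbed by `χ ≥ 1`; beyond `2`, `χ` is constant and all derivatives vanish.
-/

open Set

lemma eqOn_deriv_closure_of_eqOn {f g : ℝ → ℝ} {s : Set ℝ} (hs : IsOpen s)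
    (hfg : EqOn f g (closure s)) (hf : Continuous (deriv f)) (hg : Continuous (deriv g)) :
    EqOn (deriv f) (deriv g) (closure s) :=
  ((hfg.mono subset_closure).deriv hs).closure hf hg

lemma exists_nonneg_abs_le_on_Icc {f : ℝ → ℝ} (hf : Continuous f) (a b : ℝ) :
    ∃ M, 0 ≤ M ∧ ∀ u ∈ Icc a b, |f u| ≤ M := by
  obtain ⟨M, hM⟩ := isCompact_Icc.exists_bound_of_continuousOn hf.continuousOn
  exact ⟨max M 0, le_max_right _ _, fun u hu => (hM u hu).trans (le_max_left _ _)⟩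

lemma ContDiff.differentiable_deriv_of_two {f : ℝ → ℝ} (hf : ContDiff ℝ 2 f) :
    Differentiable ℝ (deriv f) :=
  (contDiff_succ_iff_deriv.mp (show ContDiff ℝ (1 + 1) f from hf)).2.2.differentiable one_ne_zero

lemma ContDiff.continuous_deriv_deriv {f : ℝ → ℝ} (hf : ContDiff ℝ 2 f) :
    Continuous (deriv (deriv f)) :=
  (contDiff_succ_iff_deriv.mp (show ContDiff ℝ (1 + 1) f from hf)).2.2.continuous_deriv le_rfl

namespace SmoothCutoff

variable {χ : ℝ → ℝ}

lemma deriv_eq_one_of_mem_Icc (hχ : ContDiff ℝ 1 χ) (hid : ∀ ξ ∈ Icc (0 : ℝ) 1, χ ξ = ξ)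
    {u : ℝ} (hu : u ∈ Icc (0 : ℝ) 1) : deriv χ u = 1 := by
  rw [← closure_Ioo zero_ne_one] at hu
  have h := eqOn_deriv_closure_of_eqOn (g := fun x => x) isOpen_Ioo
    (fun x hx => hid x (by rwa [closure_Ioo zero_ne_one] at hx))
    (hχ.continuous_deriv le_rfl) (by rw [deriv_id'']; exact continuous_const) hu
  simpa using h

lemma deriv_deriv_eq_zero_of_mem_Icc (hχ : ContDiff ℝ 2 χ)
    (hid : ∀ ξ ∈ Icc (0 : ℝ) 1, χ ξ = ξ) {u : ℝ} (hu : u ∈ Icc (0 : ℝ) 1) :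
    deriv (deriv χ) u = 0 := by
  rw [← closure_Ioo zero_ne_one] at hu
  have h := eqOn_deriv_closure_of_eqOn (g := fun _ => 1) isOpen_Ioo
    (fun x hx => deriv_eq_one_of_mem_Icc (hχ.of_le one_le_two) hid
      (by rwa [closure_Ioo zero_ne_one] at hx))
    hχ.continuous_deriv_deriv (by rw [deriv_const']; exact continuous_const) hu
  simpa using h

lemma deriv_eq_zero_of_two_le (hχ : ContDiff ℝ 1 χ) (h2 : ∀ ξ : ℝ, 2 ≤ ξ → χ ξ = 2)
    {u : ℝ} (hu : 2 ≤ u) : deriv χ u = 0 := by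
  have h := eqOn_deriv_closure_of_eqOn (s := Ioi 2) (g := fun _ => 2) isOpen_Ioi
    (fun x hx => h2 x (by rwa [closure_Ioi] at hx))
    (hχ.continuous_deriv le_rfl) (by rw [deriv_const']; exact continuous_const)
    (by rwa [closure_Ioi])
  simpa using h

lemma deriv_deriv_eq_zero_of_two_le (hχ : ContDiff ℝ 2 χ) (h2 : ∀ ξ : ℝ, 2 ≤ ξ → χ ξ = 2)
    {u : ℝ} (hu : 2 ≤ u) : deriv (deriv χ) u = 0 := by
  have h := eqOn_deriv_closure_of_eqOn (s := Ioi 2) (g := fun _ => 0) isOpen_Ioi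
    (fun x hx => deriv_eq_zero_of_two_le (hχ.of_le one_le_two) h2 (by rwa [closure_Ioi] at hx))
    hχ.continuous_deriv_deriv (by rw [deriv_const']; exact continuous_const)
    (by rwa [closure_Ioi])
  simpa using h

lemma one_le_apply (hid : ∀ ξ ∈ Icc (0 : ℝ) 1, χ ξ = ξ) (h2 : ∀ ξ : ℝ, 2 ≤ ξ → χ ξ = 2)
    (hmid : ∀ ξ ∈ Ioo (1 : ℝ) 2, χ ξ ∈ Ioo (1 : ℝ) 2) {u : ℝ} (hu : 1 ≤ u) : 1 ≤ χ u := by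
  rcases lt_or_ge u 2 with hu2 | hu2
  · rcases hu.eq_or_lt with rfl | hu1
    · exact (hid 1 ⟨zero_le_one, le_rfl⟩).ge
    · exact (hmid u ⟨hu1, hu2⟩).1.le
  · rw [h2 u hu2]
    norm_num

lemma apply_nonneg (hid : ∀ ξ ∈ Icc (0 : ℝ) 1, χ ξ = ξ) (h2 : ∀ ξ : ℝ, 2 ≤ ξ → χ ξ = 2)
    (hmid : ∀ ξ ∈ Ioo (1 : ℝ) 2, χ ξ ∈ Ioo (1 : ℝ) 2) {u : ℝ} (hu : 0 ≤ u) : 0 ≤ χ u := by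
  rcases le_or_gt u 1 with hu1 | hu1
  · rwa [hid u ⟨hu, hu1⟩]
  · exact zero_le_one.trans (one_le_apply hid h2 hmid hu1.le)

lemma abs_two_mul_deriv_sub_le (hχ : ContDiff ℝ 1 χ) (hid : ∀ ξ ∈ Icc (0 : ℝ) 1, χ ξ = ξ)
    (h2 : ∀ ξ : ℝ, 2 ≤ ξ → χ ξ = 2) (hmid : ∀ ξ ∈ Ioo (1 : ℝ) 2, χ ξ ∈ Ioo (1 : ℝ) 2)
    {M : ℝ} (hM0 : 0 ≤ M) (hM : ∀ u ∈ Icc (0 : ℝ) 2, |deriv χ u| ≤ M) {u : ℝ} (hu : 0 ≤ u) :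
    |2 * u * deriv χ u - χ u| ≤ (4 * M + 1) * χ u := by
  rcases le_or_gt u 1 with hu1 | hu1
  · rw [deriv_eq_one_of_mem_Icc hχ hid ⟨hu, hu1⟩, hid u ⟨hu, hu1⟩,
      show 2 * u * 1 - u = u by ring, abs_of_nonneg hu]
    nlinarith
  rcases lt_or_ge u 2 with hu2 | hu2
  · have hχ1 : 1 ≤ χ u := one_le_apply hid h2 hmid hu1.le
    calc |2 * u * deriv χ u - χ u| ≤ 2 * u * |deriv χ u| + χ u := by
          refine (abs_sub _ _).trans ?_
          rw [abs_mul, abs_of_pos (by positivity : (0 : ℝ) < 2 * u),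
            abs_of_nonneg (zero_le_one.trans hχ1)]
      _ ≤ 4 * M + χ u := by nlinarith [hM u ⟨hu, hu2.le⟩, abs_nonneg (deriv χ u)]
      _ ≤ (4 * M + 1) * χ u := by nlinarith
  · rw [deriv_eq_zero_of_two_le hχ h2 hu2, h2 u hu2]
    norm_num
    linarith

end SmoothCutoff

open SmoothCutoff

section Rescaling

variable {χ : ℝ → ℝ} {μ : ℝ}

lemma hasDerivAt_sq_div (μ t : ℝ) : HasDerivAt (fun t : ℝ => t ^ 2 / μ) (2 * t / μ) t := by
  simpa using (hasDerivAt_pow 2 t).div_const μ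

lemma deriv_mul_comp_sq_div (hχ : Differentiable ℝ χ) (hμ : μ ≠ 0) :
    deriv (fun t : ℝ => μ * χ (t ^ 2 / μ)) = fun t => 2 * t * deriv χ (t ^ 2 / μ) := by
  funext t
  refine (((hχ _).hasDerivAt.comp t (hasDerivAt_sq_div μ t)).const_mul μ).deriv.trans ?_
  field_simp

lemma deriv_deriv_mul_comp_sq_div (hχ : Differentiable ℝ χ) (hχ' : Differentiable ℝ (deriv χ))
    (hμ : μ ≠ 0) (t : ℝ) :
    deriv (deriv (fun t : ℝ => μ * χ (t ^ 2 / μ))) t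
      = 2 * deriv χ (t ^ 2 / μ) + 4 * (t ^ 2 / μ) * deriv (deriv χ) (t ^ 2 / μ) := by
  rw [deriv_mul_comp_sq_div hχ hμ]
  refine (((hasDerivAt_id t).const_mul 2).mul
    ((hχ' _).hasDerivAt.comp t (hasDerivAt_sq_div μ t))).deriv.trans ?_
  simp only [id_eq, Function.comp_apply]
  field_simp
  ring

lemma abs_mul_deriv_sub_le (hχ : ContDiff ℝ 1 χ) (hid : ∀ ξ ∈ Icc (0 : ℝ) 1, χ ξ = ξ)
    (h2 : ∀ ξ : ℝ, 2 ≤ ξ → χ ξ = 2) (hmid : ∀ ξ ∈ Ioo (1 : ℝ) 2, χ ξ ∈ Ioo (1 : ℝ) 2)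
    {M : ℝ} (hM0 : 0 ≤ M) (hM : ∀ u ∈ Icc (0 : ℝ) 2, |deriv χ u| ≤ M) (hμ : 0 < μ) (ξ : ℝ) :
    |ξ * deriv (fun t : ℝ => μ * χ (t ^ 2 / μ)) ξ - μ * χ (ξ ^ 2 / μ)|
      ≤ (4 * M + 1) * (μ * χ (ξ ^ 2 / μ)) := by
  have hG : ξ * deriv (fun t : ℝ => μ * χ (t ^ 2 / μ)) ξ - μ * χ (ξ ^ 2 / μ)
      = μ * (2 * (ξ ^ 2 / μ) * deriv χ (ξ ^ 2 / μ) - χ (ξ ^ 2 / μ)) := by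
    rw [deriv_mul_comp_sq_div (hχ.differentiable one_ne_zero) hμ.ne']
    field_simp
  rw [hG, abs_mul, abs_of_pos hμ, mul_left_comm]
  exact mul_le_mul_of_nonneg_left
    (abs_two_mul_deriv_sub_le hχ hid h2 hmid hM0 hM (by positivity)) hμ.le

lemma sq_mul_deriv_deriv_of_abs_le_sqrt (hχ : ContDiff ℝ 2 χ)
    (hid : ∀ ξ ∈ Icc (0 : ℝ) 1, χ ξ = ξ) (hμ : 0 < μ) {ξ : ℝ} (hξ : |ξ| ≤ Real.sqrt μ) :
    ξ ^ 2 * deriv (deriv (fun t : ℝ => μ * χ (t ^ 2 / μ))) ξ = 2 * (μ * χ (ξ ^ 2 / μ)) := by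
  have hu : ξ ^ 2 / μ ∈ Icc (0 : ℝ) 1 := ⟨by positivity,
    by rwa [div_le_one hμ, ← Real.sqrt_le_sqrt_iff hμ.le, Real.sqrt_sq_eq_abs]⟩
  rw [deriv_deriv_mul_comp_sq_div (hχ.differentiable two_ne_zero)
      hχ.differentiable_deriv_of_two hμ.ne', deriv_eq_one_of_mem_Icc (hχ.of_le one_le_two) hid hu,
    deriv_deriv_eq_zero_of_mem_Icc hχ hid hu, hid _ hu]
  field_simp
  ring

lemma abs_sq_mul_deriv_deriv_le (hχ : ContDiff ℝ 2 χ) {M₁ M₂ : ℝ}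
    (hM₁ : ∀ u ∈ Icc (0 : ℝ) 2, |deriv χ u| ≤ M₁)
    (hM₂ : ∀ u ∈ Icc (0 : ℝ) 2, |deriv (deriv χ) u| ≤ M₂) (hμ : 0 < μ) {ξ : ℝ}
    (hξ : |ξ| ≤ Real.sqrt (2 * μ)) :
    |ξ ^ 2 * deriv (deriv (fun t : ℝ => μ * χ (t ^ 2 / μ))) ξ| ≤ (2 * M₁ + 8 * M₂) * ξ ^ 2 := by
  set u := ξ ^ 2 / μ
  have hu : u ∈ Icc (0 : ℝ) 2 := ⟨by positivity,
    by rwa [div_le_iff₀ hμ, ← Real.sqrt_le_sqrt_iff (by positivity), Real.sqrt_sq_eq_abs]⟩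
  rw [deriv_deriv_mul_comp_sq_div (hχ.differentiable two_ne_zero)
      hχ.differentiable_deriv_of_two hμ.ne', abs_mul, abs_of_nonneg (sq_nonneg ξ), mul_comm]
  gcongr
  calc |2 * deriv χ u + 4 * u * deriv (deriv χ) u|
      ≤ 2 * |deriv χ u| + 4 * u * |deriv (deriv χ) u| := by
        refine (abs_add_le _ _).trans_eq ?_
        rw [abs_mul, abs_mul, abs_mul, abs_two, abs_of_nonneg (by norm_num : (0 : ℝ) ≤ 4),
          abs_of_nonneg hu.1]
    _ ≤ 2 * M₁ + 8 * M₂ := by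
        nlinarith [hM₁ u hu, hM₂ u hu, abs_nonneg (deriv (deriv χ) u), hu.1, hu.2]

lemma deriv_deriv_eq_zero_of_sqrt_lt_abs (hχ : ContDiff ℝ 2 χ)
    (h2 : ∀ ξ : ℝ, 2 ≤ ξ → χ ξ = 2) (hμ : 0 < μ) {ξ : ℝ} (hξ : Real.sqrt (2 * μ) < |ξ|) :
    deriv (deriv (fun t : ℝ => μ * χ (t ^ 2 / μ))) ξ = 0 := by
  have hu : 2 ≤ ξ ^ 2 / μ := by
    rw [le_div_iff₀ hμ]
    rw [← Real.sqrt_sq_eq_abs, Real.sqrt_lt_sqrt_iff (by positivity)] at hξ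
    exact hξ.le
  rw [deriv_deriv_mul_comp_sq_div (hχ.differentiable two_ne_zero)
      hχ.differentiable_deriv_of_two hμ.ne', deriv_eq_zero_of_two_le (hχ.of_le one_le_two) h2 hu,
    deriv_deriv_eq_zero_of_two_le hχ h2 hu]
  ring

end Rescaling

theorem statement19_general (χ : ℝ → ℝ) (hχ : ContDiff ℝ (⊤ : ℕ∞) χ)
    (hχid : ∀ ξ ∈ Set.Icc (0 : ℝ) 1, χ ξ = ξ)
    (hχ2 : ∀ ξ : ℝ, 2 ≤ ξ → χ ξ = 2)
    (hχmid : ∀ ξ ∈ Set.Ioo (1 : ℝ) 2, χ ξ ∈ Set.Ioo (1 : ℝ) 2) :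
    ∃ C : ℝ, ∀ μ : ℝ, 0 < μ → ∀ ξ : ℝ,
      |ξ * deriv (fun t : ℝ => μ * χ (t ^ 2 / μ)) ξ - μ * χ (ξ ^ 2 / μ)|
          ≤ C * (μ * χ (ξ ^ 2 / μ)) ∧
      (|ξ| ≤ Real.sqrt μ →
        |ξ ^ 2 * deriv (deriv (fun t : ℝ => μ * χ (t ^ 2 / μ))) ξ|
          ≤ C * (μ * χ (ξ ^ 2 / μ))) ∧
      (Real.sqrt μ ≤ |ξ| → |ξ| ≤ Real.sqrt (2 * μ) →
        |ξ ^ 2 * deriv (deriv (fun t : ℝ => μ * χ (t ^ 2 / μ))) ξ| ≤ C * ξ ^ 2) ∧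
      (Real.sqrt (2 * μ) < |ξ| →
        ξ ^ 2 * deriv (deriv (fun t : ℝ => μ * χ (t ^ 2 / μ))) ξ = 0) := by
  have hχC2 : ContDiff ℝ 2 χ := hχ.of_le (WithTop.coe_le_coe.mpr le_top)
  obtain ⟨M₁, hM₁0, hM₁⟩ := exists_nonneg_abs_le_on_Icc (hχC2.continuous_deriv one_le_two) 0 2
  obtain ⟨M₂, hM₂0, hM₂⟩ := exists_nonneg_abs_le_on_Icc hχC2.continuous_deriv_deriv 0 2
  refine ⟨4 * M₁ + 8 * M₂ + 2, fun μ hμ ξ => ?_⟩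
  have hF : 0 ≤ μ * χ (ξ ^ 2 / μ) :=
    mul_nonneg hμ.le (apply_nonneg hχid hχ2 hχmid (by positivity))
  refine ⟨?_, fun hξ => ?_, fun _ hξ => ?_, fun hξ => ?_⟩
  · refine (abs_mul_deriv_sub_le (hχC2.of_le one_le_two) hχid hχ2 hχmid hM₁0 hM₁ hμ ξ).trans ?_
    exact mul_le_mul_of_nonneg_right (by linarith) hF
  · rw [sq_mul_deriv_deriv_of_abs_le_sqrt hχC2 hχid hμ hξ, abs_of_nonneg (by positivity)]
    exact mul_le_mul_of_nonneg_right (by linarith) hF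
  · refine (abs_sq_mul_deriv_deriv_le hχC2 hM₁ hM₂ hμ hξ).trans ?_
    exact mul_le_mul_of_nonneg_right (by linarith) (sq_nonneg ξ)
  · rw [deriv_deriv_eq_zero_of_sqrt_lt_abs hχC2 hχ2 hμ hξ, mul_zero]

/-- With `F_μ(ξ) := μ χ(ξ²/μ)` and `G_{F_μ}(ξ) := ξ F_μ'(ξ) − F_μ(ξ)`,
there is a constant `C_χ` depending only on `χ` (not on `μ`) such that for all `μ > 0`
and `ξ ∈ ℝ`: `|G_{F_μ}(ξ)| ≤ C_χ F_μ(ξ)`; `|ξ² F_μ''(ξ)| ≤ C_χ F_μ(ξ)` when `|ξ| ≤ √μ`;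
`|ξ² F_μ''(ξ)| ≤ C_χ ξ²` when `√μ ≤ |ξ| ≤ √(2μ)`; and `ξ² F_μ''(ξ) = 0` when
`|ξ| > √(2μ)`. -/
theorem statement19 (χ : ℝ → ℝ) (hχ : ContDiff ℝ (⊤ : ℕ∞) χ)
    (hχ' : ∀ ξ : ℝ, 0 ≤ ξ → 0 ≤ deriv χ ξ)
    (hχid : ∀ ξ ∈ Set.Icc (0 : ℝ) 1, χ ξ = ξ)
    (hχ2 : ∀ ξ : ℝ, 2 ≤ ξ → χ ξ = 2)
    (hχmid : ∀ ξ ∈ Set.Ioo (1 : ℝ) 2, χ ξ ∈ Set.Ioo (1 : ℝ) 2) :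
    ∃ C : ℝ, ∀ μ : ℝ, 0 < μ → ∀ ξ : ℝ,
      |ξ * deriv (fun t : ℝ => μ * χ (t ^ 2 / μ)) ξ - μ * χ (ξ ^ 2 / μ)|
          ≤ C * (μ * χ (ξ ^ 2 / μ)) ∧
      (|ξ| ≤ Real.sqrt μ →
        |ξ ^ 2 * deriv (deriv (fun t : ℝ => μ * χ (t ^ 2 / μ))) ξ|
          ≤ C * (μ * χ (ξ ^ 2 / μ))) ∧
      (Real.sqrt μ ≤ |ξ| → |ξ| ≤ Real.sqrt (2 * μ) →
        |ξ ^ 2 * deriv (deriv (fun t : ℝ => μ * χ (t ^ 2 / μ))) ξ| ≤ C * ξ ^ 2) ∧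
      (Real.sqrt (2 * μ) < |ξ| →
        ξ ^ 2 * deriv (deriv (fun t : ℝ => μ * χ (t ^ 2 / μ))) ξ = 0) :=
  statement19_general χ hχ hχid hχ2 hχmid
end
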